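/- arXiv:2101.02838 — 2 statements merged into one kernel-verified Lean document; each statement's English description precedes it below -/
import Mathlib

section
/- For every integer k ≥ 2, a finite connected simple graph G is a (k,3)-completeness-resolvable graph if and only if G is isomorphic to a graph in C_k. -/
open SimpleGraph

/-- `w` enumerates a `(k, m)`-completeness-resolving set of `G`:
`w` is injective, its range `W` is a proper subset of the vertex set, and the map
`u ↦ (dist (w 1) u, …, dist (w k) u)` is a bijection from `V ∖ W` onto `[m]^k`. -/
def IsCRS {V : Type*} (G : SimpleGraph V) {k : ℕ} (w : Fin k → V) (m : ℕ) : Prop :=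
  Function.Injective w ∧ Set.range w ≠ Set.univ ∧
    Function.Injective
      (fun u : {u : V // u ∉ Set.range w} => fun i : Fin k => G.dist (w i) u.1) ∧
    Set.range (fun u : {u : V // u ∉ Set.range w} => fun i : Fin k => G.dist (w i) u.1) =
      {x : Fin k → ℕ | ∀ i, 1 ≤ x i ∧ x i ≤ m}

/-- `G` is a `(k, m)`-completeness-resolvable graph. -/
def IsCRG {V : Type*} (G : SimpleGraph V) (k m : ℕ) : Prop :=
  ∃ w : Fin k → V, IsCRS G w m

/-- `G` is completeness-resolvable. -/
def CompletenessResolvable {V : Type*} (G : SimpleGraph V) : Prop :=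
  ∃ (k m : ℕ) (w : Fin k → V), IsCRS G w m

/-! ### The family `B_k`.
Tuples in `[2]^k` are modelled as functions `Fin k → Fin 2`, the `Fin 2`-value `j`
corresponding to the entry `j + 1 ∈ {1, 2}`. -/

/-- The graph `H1 ∘ H2` on `[k] ⊔ [2]^k`. -/
def comp2 {k : ℕ} (H1 : SimpleGraph (Fin k)) (H2 : SimpleGraph (Fin k → Fin 2)) :
    SimpleGraph (Fin k ⊕ (Fin k → Fin 2)) where
  Adj a b :=
    match a, b with
    | Sum.inl i, Sum.inl j => H1.Adj i j
    | Sum.inr x, Sum.inr y => H2.Adj x y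
    | Sum.inl i, Sum.inr x => x i = 0
    | Sum.inr x, Sum.inl i => x i = 0
  symm := by
    constructor
    rintro (i | x) (j | y) h
    · exact H1.symm.symm _ _ h
    · exact h
    · exact h
    · exact H2.symm.symm _ _ h
  loopless := by
    constructor
    rintro (i | x) h
    · exact H1.loopless.irrefl i h
    · exact H2.loopless.irrefl x h

/-- The defining condition of `B_k`: for each `i`, the edges of `H2` lying in the complete
bipartite graph `B_i^k` (i.e. joining a tuple with `i`-th entry `1` to one with `i`-th entry `2`)
cover every tuple all of whose entries on the closed neighbourhood of `i` in `H1` equal `2`. -/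
def BCond {k : ℕ} (H1 : SimpleGraph (Fin k)) (H2 : SimpleGraph (Fin k → Fin 2)) : Prop :=
  ∀ (i : Fin k) (x : Fin k → Fin 2),
    (∀ j : Fin k, (j = i ∨ H1.Adj i j) → x j = 1) →
    ∃ y : Fin k → Fin 2, H2.Adj x y ∧ y i ≠ x i

/-- The family `B_k`, as a set of graphs on `[k] ⊔ [2]^k`. -/
def Bset (k : ℕ) : Set (SimpleGraph (Fin k ⊕ (Fin k → Fin 2))) :=
  {G | ∃ H1 H2, BCond H1 H2 ∧ G = comp2 H1 H2}

/-- `H2` is `H1`-minimal. -/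
def H1Minimal {k : ℕ} (H1 : SimpleGraph (Fin k)) (H2 : SimpleGraph (Fin k → Fin 2)) : Prop :=
  comp2 H1 H2 ∈ Bset k ∧
    ∀ H2' : SimpleGraph (Fin k → Fin 2), H2' < H2 → comp2 H1 H2' ∉ Bset k

/-- The graph `U_k` on `[2]^k`, with unique edge `{(1,…,1), (2,…,2)}`. -/
def Uk (k : ℕ) : SimpleGraph (Fin k → Fin 2) :=
  SimpleGraph.fromEdgeSet {s(fun _ => (0 : Fin 2), fun _ => (1 : Fin 2))}

/-- The graph `V_k` on `[2]^k`, whose edges join `(2,…,2)` to the tuples having exactly one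
entry equal to `1`. -/
def Vk (k : ℕ) : SimpleGraph (Fin k → Fin 2) :=
  SimpleGraph.fromEdgeSet
    {e | ∃ i : Fin k, e = s(Function.update (fun _ => (1 : Fin 2)) i 0, fun _ => (1 : Fin 2))}

/-- The graph `R_k` on `[2]^k`: the perfect matching pairing each tuple with its complement. -/
def Rk (k : ℕ) : SimpleGraph (Fin k → Fin 2) :=
  SimpleGraph.fromRel fun x y => ∀ i, x i ≠ y i

/-- The hypercube graph `Q_k` on `[2]^k`: tuples are adjacent when they differ in exactly one
coordinate. -/
def Qk (k : ℕ) : SimpleGraph (Fin k → Fin 2) :=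
  SimpleGraph.fromRel fun x y => ∃ i, x i ≠ y i ∧ ∀ j, j ≠ i → x j = y j

/-! ### The family `C_k`.
Tuples in `[3]^k` are modelled as functions `Fin k → Fin 3`, the `Fin 3`-value `j`
corresponding to the entry `j + 1 ∈ {1, 2, 3}`. -/

/-- Entries `a` and `b` (of `{1,2,3}`, coded in `Fin 3`) satisfy `|a - b| ≤ 1`. -/
def near3 (a b : Fin 3) : Prop := (a : ℕ) ≤ (b : ℕ) + 1 ∧ (b : ℕ) ≤ (a : ℕ) + 1

/-- `{x, y}` is an edge of the bipartite graph `C_i^k` (between `i`-th entry `1` and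
`i`-th entry `2`, with all other entries differing by at most `1`). -/
def CAdj {k : ℕ} (i : Fin k) (x y : Fin k → Fin 3) : Prop :=
  ((x i = 0 ∧ y i = 1) ∨ (x i = 1 ∧ y i = 0)) ∧ ∀ t, t ≠ i → near3 (x t) (y t)

/-- `{x, y}` is an edge of the bipartite graph `D_i^k` (between `i`-th entry `2` and
`i`-th entry `3`, with all other entries differing by at most `1`). -/
def DAdj {k : ℕ} (i : Fin k) (x y : Fin k → Fin 3) : Prop :=
  ((x i = 1 ∧ y i = 2) ∨ (x i = 2 ∧ y i = 1)) ∧ ∀ t, t ≠ i → near3 (x t) (y t)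

/-- The graph `K̄_[k] ∘ H2` on `[k] ⊔ [3]^k`. -/
def comp3 {k : ℕ} (H2 : SimpleGraph (Fin k → Fin 3)) :
    SimpleGraph (Fin k ⊕ (Fin k → Fin 3)) where
  Adj a b :=
    match a, b with
    | Sum.inl _, Sum.inl _ => False
    | Sum.inr x, Sum.inr y => H2.Adj x y
    | Sum.inl i, Sum.inr x => x i = 0
    | Sum.inr x, Sum.inl i => x i = 0
  symm := by
    constructor
    rintro (i | x) (j | y) h
    · exact h
    · exact h
    · exact h
    · exact H2.symm.symm _ _ h
  loopless := by
    constructor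
    rintro (i | x) h
    · exact h
    · exact H2.loopless.irrefl x h

/-- The defining condition of `C_k`: every edge of `H2` lies in some `C_i^k` or `D_i^k`;
for each `i` the edges of `H2` in `C_i^k` cover `[3]^k_i(2)`, and the edges of `H2` in
`D_i^k` cover `S_i^k`. -/
def CCond {k : ℕ} (H2 : SimpleGraph (Fin k → Fin 3)) : Prop :=
  (∀ x y, H2.Adj x y → ∃ i, CAdj i x y ∨ DAdj i x y) ∧
  (∀ (i : Fin k) (x : Fin k → Fin 3), x i = 1 → ∃ y, H2.Adj x y ∧ CAdj i x y) ∧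
  (∀ (i : Fin k) (x : Fin k → Fin 3), x i = 2 → (∀ t, x t ≠ 0) →
    ∃ y, H2.Adj x y ∧ DAdj i x y)

/-- The family `C_k`, as a set of graphs on `[k] ⊔ [3]^k`. -/
def Cset (k : ℕ) : Set (SimpleGraph (Fin k ⊕ (Fin k → Fin 3))) :=
  {G | ∃ H2, CCond H2 ∧ G = comp3 H2}

/-- The graph `Γ_k` on `[3]^k`: distinct tuples are adjacent when all their entries differ
by at most `1`. -/
def GammaK (k : ℕ) : SimpleGraph (Fin k → Fin 3) :=
  SimpleGraph.fromRel fun x y => ∀ i, near3 (x i) (y i)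

/-- `H2` is `k`-minimal. -/
def KMinimalC {k : ℕ} (H2 : SimpleGraph (Fin k → Fin 3)) : Prop :=
  comp3 H2 ∈ Cset k ∧
    ∀ H2' : SimpleGraph (Fin k → Fin 3), H2' < H2 → comp3 H2' ∉ Cset k

/-!
Label each vertex outside `W` by its distance vector minus one: a `(k, 3)`-CRS is the same as an
identification of `V` with `[k] ⊔ [3]^k` in which `w_i` lies at distance `x_(i)` from `x`. In
such a graph `w_i` is adjacent to `x` iff `x_(i) = 1`, `W` is independent (an edge `w_i w_j`
would put `x` with `x_(i) = 3`, `x_(j) = 1` at distance at most `2` from `w_i`), and adjacent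
tuples differ by at most one in every coordinate, so each edge of `H2` lies in some `C_i^k` or
`D_i^k`. A shortest path from `w_i` to `x` with `x_(i) = 2` (resp. `x_(i) = 3` and no entry `1`)
ends with an edge from a tuple `y` with `y_(i) = 1` (resp. `y_(i) = 2`): these are the covering
conditions. Conversely, the covering conditions give walks of length `x_(i)` from `i` to `x` in
`K̄_[k] ∘ H2`, and a potential that changes by at most one along edges shows they are shortest.
-/

open Sum

namespace SimpleGraph

variable {V W : Type*} {G : SimpleGraph V} {G' : SimpleGraph W} {u v : V}

lemma Iso.edist_le (f : G ≃g G') (u v : V) : G'.edist (f u) (f v) ≤ G.edist u v := by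
  by_cases h : G.Reachable u v
  · obtain ⟨p, hp⟩ := h.exists_walk_length_eq_edist
    rw [← hp, ← p.length_map f.toHom]
    exact SimpleGraph.edist_le _
  · simp [edist_eq_top_of_not_reachable h]

theorem Iso.dist_eq (f : G ≃g G') (u v : V) : G'.dist (f u) (f v) = G.dist u v := by
  have h := f.symm.edist_le (f u) (f v)
  simp only [RelIso.symm_apply_apply] at h
  rw [dist, dist, le_antisymm (f.edist_le u v) h]

lemma Walk.apply_le_apply_add_length {f : V → ℕ}
    (hf : ∀ ⦃a b⦄, G.Adj a b → f b ≤ f a + 1) :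
    ∀ {u v : V} (p : G.Walk u v), f v ≤ f u + p.length
  | _, _, .nil => by simp
  | _, _, .cons h p => by
    have := hf h
    have := p.apply_le_apply_add_length hf
    rw [Walk.length_cons]
    omega

lemma Reachable.apply_le_apply_add_dist {f : V → ℕ}
    (hf : ∀ ⦃a b⦄, G.Adj a b → f b ≤ f a + 1) (h : G.Reachable u v) :
    f v ≤ f u + G.dist u v := by
  obtain ⟨p, hp⟩ := h.exists_walk_length_eq_dist
  exact hp ▸ p.apply_le_apply_add_length hf

lemma exists_adj_dist_eq_of_dist_eq_add_one {n : ℕ} (h : G.dist u v = n + 1) :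
    ∃ b, G.Adj b v ∧ G.dist u b = n := by
  rw [dist_comm] at h
  obtain ⟨p, hp⟩ :=
    (Reachable.of_dist_ne_zero (by omega : G.dist v u ≠ 0)).exists_walk_length_eq_dist
  cases p with
  | nil => simp_all
  | @cons _ b _ hvb q =>
    refine ⟨b, hvb.symm, le_antisymm ?_ ?_⟩
    · rw [dist_comm]
      have := dist_le q
      rw [Walk.length_cons] at hp
      omega
    · have := hvb.reachable.dist_triangle_left u
      rw [dist_eq_one_iff_adj.mpr hvb, dist_comm (u := b)] at this
      omega

end SimpleGraph

instance : DecidableRel near3 := fun _ _ => inferInstanceAs (Decidable (_ ∧ _))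

lemma near3_comm {a b : Fin 3} : near3 a b ↔ near3 b a := and_comm

lemma near3_and_ne_iff {a b : Fin 3} : near3 a b ∧ a ≠ b ↔
    ((a = 0 ∧ b = 1) ∨ (a = 1 ∧ b = 0)) ∨ ((a = 1 ∧ b = 2) ∨ (a = 2 ∧ b = 1)) := by
  revert a b; decide

lemma gammaK_adj_iff_near3 {k : ℕ} {x y : Fin k → Fin 3} :
    (GammaK k).Adj x y ↔ x ≠ y ∧ ∀ t, near3 (x t) (y t) := by
  simp only [GammaK, fromRel_adj, near3_comm (a := y _), or_self]

lemma gammaK_adj_iff {k : ℕ} {x y : Fin k → Fin 3} :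
    (GammaK k).Adj x y ↔ ∃ i, CAdj i x y ∨ DAdj i x y := by
  simp only [gammaK_adj_iff_near3, CAdj, DAdj, ← or_and_right, ← near3_and_ne_iff]
  constructor
  · rintro ⟨hne, hnear⟩
    obtain ⟨i, hi⟩ := Function.ne_iff.mp hne
    exact ⟨i, ⟨hnear i, hi⟩, fun t _ => hnear t⟩
  · rintro ⟨i, ⟨hnear_i, hne_i⟩, hnear⟩
    refine ⟨fun h => hne_i (congrFun h i), fun t => ?_⟩
    by_cases ht : t = i
    · exact ht ▸ hnear_i
    · exact hnear t ht

section comp3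

variable {k : ℕ} {H2 : SimpleGraph (Fin k → Fin 3)}

lemma CCond.le_gammaK (hC : CCond H2) : H2 ≤ GammaK k :=
  fun x y hxy => gammaK_adj_iff.mpr (hC.1 x y hxy)

/-- A potential for the distance from `inl i`, changing by at most one along edges: the vertex
`inl j`, `j ≠ i`, is adjacent to tuples of every level `1, 2, 3`, so it sits at level `2`. -/
def comp3Level (i : Fin k) : Fin k ⊕ (Fin k → Fin 3) → ℕ :=
  Sum.elim (fun j => if j = i then 0 else 2) (fun x => x i + 1)

lemma comp3Level_le_add_one_of_adj (hH : H2 ≤ GammaK k) (i : Fin k)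
    ⦃a b : Fin k ⊕ (Fin k → Fin 3)⦄ (h : (comp3 H2).Adj a b) :
    comp3Level i b ≤ comp3Level i a + 1 := by
  rcases a with j | x <;> rcases b with j' | y
  · exact h.elim
  · change y j = 0 at h
    have := (y i).isLt
    by_cases hj : j = i <;> simp_all [comp3Level]
  · change x j' = 0 at h
    by_cases hj : j' = i <;> simp_all [comp3Level]
  · simpa [comp3Level, near3] using ((gammaK_adj_iff_near3.mp (hH h)).2 i).2

lemma CCond.exists_walk_inl_inr (hC : CCond H2) (i : Fin k) (x : Fin k → Fin 3) :
    ∃ p : (comp3 H2).Walk (inl i) (inr x), p.length = x i + 1 := by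
  have level_two : ∀ y : Fin k → Fin 3, y i = 1 →
      ∃ p : (comp3 H2).Walk (inl i) (inr y), p.length = 2 := by
    intro y hy
    obtain ⟨z, hyz, hz, -⟩ := hC.2.1 i y hy
    have hz : z i = 0 := by rcases hz with ⟨h, -⟩ | ⟨-, h⟩ <;> simp_all
    have hiz : (comp3 H2).Adj (inl i) (inr z) := hz
    have hzy : (comp3 H2).Adj (inr z) (inr y) := hyz.symm
    exact ⟨.cons hiz (.cons hzy .nil), rfl⟩
  rcases (by omega : x i = 0 ∨ x i = 1 ∨ x i = 2) with hx | hx | hx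
  · exact ⟨.cons (show (comp3 H2).Adj (inl i) (inr x) from hx) .nil, by simp [hx]⟩
  · simpa [hx] using level_two x hx
  · by_cases hx0 : ∃ j, x j = 0
    · -- `i – 0 – j – x`, through the all-ones tuple `0`
      obtain ⟨j, hj⟩ := hx0
      have hij : (comp3 H2).Adj (inl i) (inr 0) := rfl
      have hj0 : (comp3 H2).Adj (inr 0) (inl j) := rfl
      exact ⟨.cons hij (.cons hj0 (.cons (show (comp3 H2).Adj (inl j) (inr x) from hj) .nil)),
        by simp [hx]⟩
    · push Not at hx0
      obtain ⟨y, hxy, hy, -⟩ := hC.2.2 i x hx hx0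
      have hy : y i = 1 := by rcases hy with ⟨h, -⟩ | ⟨-, h⟩ <;> simp_all
      obtain ⟨p, hp⟩ := level_two y hy
      exact ⟨p.concat (show (comp3 H2).Adj (inr y) (inr x) from hxy.symm), by simp [hp, hx]⟩

theorem CCond.dist_comp3_inl_inr (hC : CCond H2) (i : Fin k) (x : Fin k → Fin 3) :
    (comp3 H2).dist (inl i) (inr x) = x i + 1 := by
  obtain ⟨p, hp⟩ := hC.exists_walk_inl_inr i x
  refine le_antisymm (hp ▸ dist_le p) ?_
  simpa [comp3Level] using
    p.reachable.apply_le_apply_add_dist (comp3Level_le_add_one_of_adj hC.le_gammaK i)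

end comp3

section CRS

variable {V : Type*} {G : SimpleGraph V} {k m : ℕ}

lemma isCRS_of_equiv [NeZero m] (φ : Fin k ⊕ (Fin k → Fin m) ≃ V)
    (hφ : ∀ i x, G.dist (φ (inl i)) (φ (inr x)) = x i + 1) :
    IsCRS G (fun i => φ (inl i)) m := by
  have hcompl : ∀ u, u ∉ Set.range (fun i => φ (inl i)) → ∃ x, φ (inr x) = u := by
    intro u hu
    rcases hs : φ.symm u with j | x
    · exact absurd ⟨j, show φ (inl j) = u by rw [← hs, φ.apply_symm_apply]⟩ hu
    · exact ⟨x, by rw [← hs, φ.apply_symm_apply]⟩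
  have hinr : ∀ x, φ (inr x) ∉ Set.range (fun i => φ (inl i)) := by
    rintro x ⟨i, hi⟩
    exact inl_ne_inr (φ.injective hi)
  refine ⟨φ.injective.comp inl_injective, fun h => hinr 0 (h ▸ trivial), ?_, ?_⟩
  · rintro ⟨u, hu⟩ ⟨v, hv⟩ huv
    obtain ⟨x, rfl⟩ := hcompl u hu
    obtain ⟨y, rfl⟩ := hcompl v hv
    have hxy : x = y := funext fun i => Fin.ext (by simpa [hφ] using congrFun huv i)
    simp [hxy]
  · ext g
    constructor
    · rintro ⟨⟨u, hu⟩, rfl⟩ i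
      obtain ⟨x, rfl⟩ := hcompl u hu
      simp [hφ, Nat.succ_le_of_lt (x i).isLt]
    · intro hg
      let x : Fin k → Fin m := fun i => ⟨g i - 1, by have := hg i; omega⟩
      refine ⟨⟨φ (inr x), hinr x⟩, funext fun i => ?_⟩
      have := hg i
      simp only [hφ, x]
      omega

lemma IsCRS.exists_equiv {w : Fin k → V} (hw : IsCRS G w m) :
    ∃ φ : Fin k ⊕ (Fin k → Fin m) ≃ V, (∀ i, φ (inl i) = w i) ∧
      ∀ i x, G.dist (w i) (φ (inr x)) = x i + 1 := by
  obtain ⟨hinj, -, hΨinj, hΨrange⟩ := hw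
  have hbox : ∀ (u : {u // u ∉ Set.range w}) i, 1 ≤ G.dist (w i) u ∧ G.dist (w i) u ≤ m :=
    fun u => (hΨrange.le ⟨u, rfl⟩ :)
  let label (u : {u // u ∉ Set.range w}) : Fin k → Fin m :=
    fun i => ⟨G.dist (w i) u - 1, by have := hbox u i; omega⟩
  have hlabel : ∀ u i, (label u i : ℕ) + 1 = G.dist (w i) u := fun u i => by
    have := hbox u i
    simp only [label]
    omega
  have hbij : Function.Bijective label := by
    refine ⟨fun u v huv => hΨinj (funext fun i => ?_), fun x => ?_⟩
    · change G.dist (w i) u = G.dist (w i) v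
      rw [← hlabel u i, ← hlabel v i, huv]
    · obtain ⟨u, hu⟩ := hΨrange.ge (show (fun i => (x i : ℕ) + 1) ∈ _ from
        fun i => ⟨Nat.le_add_left 1 _, Nat.succ_le_of_lt (x i).isLt⟩)
      refine ⟨u, funext fun i => Fin.ext ?_⟩
      have := hlabel u i
      have := congrFun hu i
      simp_all
  let e := Equiv.ofBijective label hbij
  classical
  refine ⟨(Equiv.sumCongr (Equiv.ofInjective w hinj) e.symm).trans
    (Equiv.sumCompl (· ∈ Set.range w)), fun i => rfl, fun i x => ?_⟩
  have := hlabel (e.symm x) i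
  rw [show label (e.symm x) = x from e.apply_symm_apply x] at this
  simpa using this.symm

theorem isCRG_iff_exists_equiv [NeZero m] :
    IsCRG G k m ↔ ∃ φ : Fin k ⊕ (Fin k → Fin m) ≃ V,
      ∀ i x, G.dist (φ (inl i)) (φ (inr x)) = x i + 1 := by
  constructor
  · rintro ⟨w, hw⟩
    obtain ⟨φ, hφw, hφ⟩ := hw.exists_equiv
    exact ⟨φ, by simpa only [← hφw] using hφ⟩
  · rintro ⟨φ, hφ⟩
    exact ⟨_, isCRS_of_equiv φ hφ⟩

end CRS

section labelled

variable {V : Type*} {G : SimpleGraph V} {k : ℕ} {φ : Fin k ⊕ (Fin k → Fin 3) ≃ V}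
  (hφ : ∀ i x, G.dist (φ (inl i)) (φ (inr x)) = x i + 1)
include hφ

lemma adj_inl_inr_iff (i : Fin k) (x : Fin k → Fin 3) :
    G.Adj (φ (inl i)) (φ (inr x)) ↔ x i = 0 := by
  rw [← dist_eq_one_iff_adj, hφ, Fin.ext_iff]
  simp

lemma not_adj_inl_inl (i j : Fin k) : ¬ G.Adj (φ (inl i)) (φ (inl j)) := by
  intro h
  have hij : i ≠ j := fun hij => h.ne (hij ▸ rfl)
  let x : Fin k → Fin 3 := fun t => if t = i then 2 else 0
  have := h.reachable.dist_triangle_left (φ (inr x))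
  rw [dist_eq_one_iff_adj.mpr h, hφ, hφ] at this
  simp [x, hij.symm] at this

lemma near3_of_adj_inr_inr {x y : Fin k → Fin 3} (h : G.Adj (φ (inr x)) (φ (inr y)))
    (t : Fin k) : near3 (x t) (y t) := by
  have := h.diff_dist_adj (u := φ (inl t))
  rw [hφ, hφ] at this
  unfold near3
  omega

lemma comap_inr_le_gammaK : G.comap (φ ∘ inr) ≤ GammaK k := fun _ _ h =>
  gammaK_adj_iff_near3.mpr ⟨fun hxy => h.ne (hxy ▸ rfl), near3_of_adj_inr_inr hφ h⟩

lemma comp3_comap_inr_eq : comp3 (G.comap (φ ∘ inr)) = G.comap φ := by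
  ext (i | x) (j | y)
  · exact iff_of_false id (not_adj_inl_inl hφ i j)
  · exact (adj_inl_inr_iff hφ i y).symm
  · exact (G.adj_comm _ _).trans (adj_inl_inr_iff hφ j x) |>.symm
  · rfl

lemma cCond_comap_inr : CCond (G.comap (φ ∘ inr)) := by
  refine ⟨fun x y h => gammaK_adj_iff.mp (comap_inr_le_gammaK hφ h), fun i x hx => ?_,
    fun i x hx hx0 => ?_⟩
  · have hdist : G.dist (φ (inl i)) (φ (inr x)) = 1 + 1 := by simp [hφ, hx]
    obtain ⟨b, hbx, hb⟩ := exists_adj_dist_eq_of_dist_eq_add_one hdist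
    obtain ⟨j | y, rfl⟩ := φ.surjective b
    · exact absurd (dist_eq_one_iff_adj.mp hb) (not_adj_inl_inl hφ i j)
    · have hy : y i = 0 := (adj_inl_inr_iff hφ i y).mp (dist_eq_one_iff_adj.mp hb)
      exact ⟨y, hbx.symm, .inr ⟨hx, hy⟩, fun t _ => near3_of_adj_inr_inr hφ hbx.symm t⟩
  · have hdist : G.dist (φ (inl i)) (φ (inr x)) = 2 + 1 := by simp [hφ, hx]
    obtain ⟨b, hbx, hb⟩ := exists_adj_dist_eq_of_dist_eq_add_one hdist
    obtain ⟨j | y, rfl⟩ := φ.surjective b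
    · exact absurd ((adj_inl_inr_iff hφ j x).mp hbx) (hx0 j)
    · have hy : y i = 1 := Fin.ext (by simpa [hφ] using hb)
      exact ⟨y, hbx.symm, .inr ⟨hx, hy⟩, fun t _ => near3_of_adj_inr_inr hφ hbx.symm t⟩

end labelled

theorem isCRG_three_iff_general {V : Type*} (k : ℕ) (G : SimpleGraph V) :
    IsCRG G k 3 ↔ ∃ H ∈ Cset k, Nonempty (G ≃g H) := by
  rw [isCRG_iff_exists_equiv]
  constructor
  · rintro ⟨φ, hφ⟩
    refine ⟨_, ⟨_, cCond_comap_inr hφ, rfl⟩, ⟨?_⟩⟩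
    rw [comp3_comap_inr_eq hφ]
    exact (Iso.comap φ G).symm
  · rintro ⟨_, ⟨H2, hC, rfl⟩, ⟨f⟩⟩
    exact ⟨f.symm.toEquiv, fun i x => (f.symm.dist_eq _ _).trans (hC.dist_comp3_inl_inr i x)⟩

/-- **Proposition.** For `k ≥ 2`, a finite connected simple graph `G` is a `(k,3)`-CRG iff
`G` is isomorphic to a graph in `C_k`. -/
theorem isCRG_three_iff {V : Type*} [Fintype V] (k : ℕ) (hk : 2 ≤ k) (G : SimpleGraph V)
    (hconn : G.Connected) (hcard : 2 ≤ Fintype.card V) :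
    IsCRG G k 3 ↔ ∃ H ∈ Cset k, Nonempty (G ≃g H) :=
  isCRG_three_iff_general k G
end

section
/- If a finite connected simple graph G is a (k,m)-completeness-resolvable graph with k ≥ 2 and m ≥ 2, then m = 2 or m = 3. -/
open SimpleGraph

/-! The vertex with code `(1, 1, …, 1)` is adjacent to `w₁` and `w₂`, and the vertex with code
`(m, 1, …, 1)` is adjacent to `w₂`, so `w₁ – v – w₂ – u` is a walk of length `3` and
`m = d(w₁, u) ≤ 3`. -/

section

variable {V : Type*} {G : SimpleGraph V} {k m : ℕ} {w : Fin k → V}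

lemma IsCRS.exists_dist_eq (hw : IsCRS G w m) {x : Fin k → ℕ} (hx : ∀ i, 1 ≤ x i ∧ x i ≤ m) :
    ∃ u, ∀ i, G.dist (w i) u = x i := by
  obtain ⟨u, hu⟩ : x ∈ Set.range _ := by rw [hw.2.2.2]; exact hx
  exact ⟨u, congrFun hu⟩

lemma IsCRS.le_three (hw : IsCRS G w m) (hk : 2 ≤ k) : m ≤ 3 := by
  obtain rfl | hm := Nat.eq_zero_or_pos m
  · omega
  let i₀ : Fin k := ⟨0, by omega⟩
  let i₁ : Fin k := ⟨1, by omega⟩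
  have hi : i₁ ≠ i₀ := by simp [i₀, i₁, Fin.ext_iff]
  obtain ⟨v, hv⟩ := hw.exists_dist_eq (x := fun _ => 1) fun _ => ⟨le_rfl, hm⟩
  obtain ⟨u, hu⟩ := hw.exists_dist_eq (x := Function.update (fun _ => 1) i₀ m) fun i => by
    rw [Function.update_apply]; split_ifs <;> omega
  have hv₀ : G.Adj (w i₀) v := dist_eq_one_iff_adj.mp (hv i₀)
  have hv₁ : G.Adj v (w i₁) := (dist_eq_one_iff_adj.mp (hv i₁)).symm
  have hu₁ : G.Adj (w i₁) u := dist_eq_one_iff_adj.mp (by simpa [hi] using hu i₁)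
  calc m = G.dist (w i₀) u := by simpa using (hu i₀).symm
    _ ≤ (Walk.cons hv₀ (Walk.cons hv₁ (Walk.cons hu₁ Walk.nil))).length := dist_le _
    _ = 3 := rfl

end

theorem m_eq_two_or_three_general {V : Type*} (G : SimpleGraph V) (k m : ℕ) (hk : 2 ≤ k)
    (hm : 2 ≤ m) (h : IsCRG G k m) : m = 2 ∨ m = 3 := by
  obtain ⟨w, hw⟩ := h
  have := hw.le_three hk
  omega

/-- **Lemma.** If a finite connected simple graph `G` is a `(k,m)`-CRG with `k ≥ 2` and
`m ≥ 2`, then `m = 2` or `m = 3`. -/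
theorem m_eq_two_or_three {V : Type*} [Fintype V] (G : SimpleGraph V)
    (hconn : G.Connected) (hcard : 2 ≤ Fintype.card V) (k m : ℕ) (hk : 2 ≤ k)
    (hm : 2 ≤ m) (h : IsCRG G k m) : m = 2 ∨ m = 3 :=
  m_eq_two_or_three_general G k m hk hm h
end
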